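/- arXiv:1504.06096 — 4 statements merged into one kernel-verified Lean document; each statement's English description precedes it below -/
import Mathlib

section
/- The SCM lower bound is a true lower bound: for every μ, λ_LB(μ;C_J) := min_{y ∈ 𝒴_LB(C_J)} θ(μ)ᵀ y ≤ λ_min(A(μ)), where 𝒴_LB(C_J) = {y ∈ ℬ : θ(μᵢ)ᵀ y ≥ λ_min(A(μᵢ)), i=1,...,J}. -/
open Matrix

/-- Smallest eigenvalue of a (Hermitian) matrix. -/
noncomputable def lamMin {n : ℕ} {𝕜 : Type*} [RCLike 𝕜] (A : Matrix (Fin n) (Fin n) 𝕜) : ℝ :=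
  if h : A.IsHermitian then ⨅ i, h.eigenvalues i else 0

/-- Largest eigenvalue of a (Hermitian) matrix. -/
noncomputable def lamMax {n : ℕ} {𝕜 : Type*} [RCLike 𝕜] (A : Matrix (Fin n) (Fin n) 𝕜) : ℝ :=
  if h : A.IsHermitian then ⨆ i, h.eigenvalues i else 0

/-- Rayleigh quotient u*Au/(u*u). -/
noncomputable def RQ {n : ℕ} (A : Matrix (Fin n) (Fin n) ℂ) (u : Fin n → ℂ) : ℝ :=
  (star u ⬝ᵥ A *ᵥ u).re / (star u ⬝ᵥ u).re

/-!
Take `v` an eigenvector of `A(μ)` for its smallest eigenvalue and put `y q := RQ (A q) v`.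
Writing the quadratic form of a Hermitian matrix in its eigenbasis shows that a Rayleigh
quotient lies between the extreme eigenvalues, and the Rayleigh quotient is linear in the
matrix, so `θ(ν)ᵀ y = RQ (A(ν)) v` for every `ν`. Hence `y` lies in the box and satisfies all
sample constraints, and its objective value is `RQ (A(μ)) v = λ_min(A(μ))`. The box also bounds
the objective from below, so `sInf` is a genuine infimum rather than the junk value `0`.
-/

namespace Matrix

variable {𝕜 n : Type*} [RCLike 𝕜] [Fintype n]

theorem star_star_mulVec (U : Matrix n n 𝕜) (v : n → 𝕜) : star (star U *ᵥ v) = star v ᵥ* U := by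
  rw [star_mulVec, star_eq_conjTranspose, conjTranspose_conjTranspose]

theorem re_dotProduct_star_self_pos {v : n → 𝕜} (hv : v ≠ 0) : 0 < RCLike.re (star v ⬝ᵥ v) := by
  open scoped ComplexOrder in
  exact (RCLike.pos_iff.mp (dotProduct_star_self_pos_iff.mpr hv)).1

variable [DecidableEq n]

theorem re_dotProduct_self_eq_sum_of_mem_unitaryGroup {U : Matrix n n 𝕜}
    (hU : U ∈ unitaryGroup n 𝕜) (v : n → 𝕜) :
    RCLike.re (star v ⬝ᵥ v) = ∑ i, ‖(star U *ᵥ v) i‖ ^ 2 := by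
  have hw : star (star U *ᵥ v) ⬝ᵥ star U *ᵥ v = star v ⬝ᵥ v := by
    rw [star_star_mulVec, ← dotProduct_mulVec, mulVec_mulVec, Unitary.mul_star_self_of_mem hU,
      one_mulVec]
  rw [← hw]
  simp only [dotProduct, map_sum, Pi.star_apply, RCLike.star_def, RCLike.conj_mul]
  norm_cast

namespace IsHermitian

variable {B : Matrix n n 𝕜}

theorem re_dotProduct_mulVec_eq_sum (hB : B.IsHermitian) (v : n → 𝕜) :
    RCLike.re (star v ⬝ᵥ B *ᵥ v) =
      ∑ i, hB.eigenvalues i * ‖(star (hB.eigenvectorUnitary : Matrix n n 𝕜) *ᵥ v) i‖ ^ 2 := by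
  conv_lhs => rw [hB.spectral_theorem, Unitary.conjStarAlgAut_apply, ← mulVec_mulVec,
    ← mulVec_mulVec, dotProduct_mulVec, ← star_star_mulVec]
  simp only [dotProduct, mulVec_diagonal, Function.comp_apply, map_sum, Pi.star_apply]
  refine Finset.sum_congr rfl fun i _ => ?_
  rw [mul_left_comm, RCLike.re_ofReal_mul, RCLike.star_def, RCLike.conj_mul]
  norm_cast

theorem iInf_eigenvalues_mul_le (hB : B.IsHermitian) (v : n → 𝕜) :
    (⨅ i, hB.eigenvalues i) * RCLike.re (star v ⬝ᵥ v) ≤ RCLike.re (star v ⬝ᵥ B *ᵥ v) := by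
  rw [re_dotProduct_self_eq_sum_of_mem_unitaryGroup hB.eigenvectorUnitary.2,
    hB.re_dotProduct_mulVec_eq_sum, Finset.mul_sum]
  gcongr with i
  exact ciInf_le (Set.finite_range _).bddBelow i

theorem re_dotProduct_mulVec_le_iSup_eigenvalues_mul (hB : B.IsHermitian) (v : n → 𝕜) :
    RCLike.re (star v ⬝ᵥ B *ᵥ v) ≤ (⨆ i, hB.eigenvalues i) * RCLike.re (star v ⬝ᵥ v) := by
  rw [re_dotProduct_self_eq_sum_of_mem_unitaryGroup hB.eigenvectorUnitary.2,
    hB.re_dotProduct_mulVec_eq_sum, Finset.mul_sum]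
  gcongr with i
  exact le_ciSup (Set.finite_range _).bddAbove i

theorem re_dotProduct_self_eigenvectorBasis (hB : B.IsHermitian) (i : n) :
    RCLike.re (star ⇑(hB.eigenvectorBasis i) ⬝ᵥ ⇑(hB.eigenvectorBasis i)) = 1 := by
  simp [re_dotProduct_self_eq_sum_of_mem_unitaryGroup hB.eigenvectorUnitary.2,
    hB.star_eigenvectorUnitary_mulVec, Pi.single_apply, apply_ite]

theorem re_dotProduct_mulVec_eigenvectorBasis (hB : B.IsHermitian) (i : n) :
    RCLike.re (star ⇑(hB.eigenvectorBasis i) ⬝ᵥ B *ᵥ ⇑(hB.eigenvectorBasis i)) =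
      hB.eigenvalues i := by
  simp [hB.re_dotProduct_mulVec_eq_sum, hB.star_eigenvectorUnitary_mulVec, Pi.single_apply,
    apply_ite]

end IsHermitian

end Matrix

section RayleighQuotient

variable {n : ℕ}

theorem lamMin_le_RQ {B : Matrix (Fin n) (Fin n) ℂ} (hB : B.IsHermitian) {v : Fin n → ℂ}
    (hv : v ≠ 0) : lamMin B ≤ RQ B v := by
  have hv_pos : 0 < (star v ⬝ᵥ v).re := re_dotProduct_star_self_pos hv
  rw [RQ, le_div_iff₀ hv_pos, lamMin, dif_pos hB]
  exact hB.iInf_eigenvalues_mul_le v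

theorem RQ_le_lamMax {B : Matrix (Fin n) (Fin n) ℂ} (hB : B.IsHermitian) {v : Fin n → ℂ}
    (hv : v ≠ 0) : RQ B v ≤ lamMax B := by
  have hv_pos : 0 < (star v ⬝ᵥ v).re := re_dotProduct_star_self_pos hv
  rw [RQ, div_le_iff₀ hv_pos, lamMax, dif_pos hB]
  exact hB.re_dotProduct_mulVec_le_iSup_eigenvalues_mul v

theorem exists_RQ_eq_lamMin [NeZero n] {B : Matrix (Fin n) (Fin n) ℂ} (hB : B.IsHermitian) :
    ∃ v ≠ 0, RQ B v = lamMin B := by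
  obtain ⟨i, hi⟩ := exists_eq_ciInf_of_finite (f := hB.eigenvalues)
  have hnorm := hB.re_dotProduct_self_eigenvectorBasis i
  refine ⟨hB.eigenvectorBasis i, fun hzero => by simp [hzero] at hnorm, ?_⟩
  rw [RQ, lamMin, dif_pos hB, ← hi]
  exact (congrArg₂ (· / ·) (hB.re_dotProduct_mulVec_eigenvectorBasis i) hnorm).trans (div_one _)

theorem RQ_sum_smul {Q : Type*} [Fintype Q] (A : Q → Matrix (Fin n) (Fin n) ℂ) (c : Q → ℝ)
    (v : Fin n → ℂ) : RQ (∑ q, (c q : ℂ) • A q) v = ∑ q, c q * RQ (A q) v := by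
  simp only [RQ, sum_mulVec, smul_mulVec, dotProduct_sum, dotProduct_smul, Complex.re_sum,
    smul_eq_mul, Complex.re_ofReal_mul, Finset.sum_div, mul_div_assoc]

end RayleighQuotient

theorem min_mul_le_mul_of_mem_Icc {l u c y : ℝ} (hy : y ∈ Set.Icc l u) :
    min (c * l) (c * u) ≤ c * y := by
  rcases le_total 0 c with hc | hc
  · exact min_le_of_left_le (mul_le_mul_of_nonneg_left hy.1 hc)
  · exact min_le_of_right_le (mul_le_mul_of_nonpos_left hy.2 hc)

/-- the SCM lower bound `λ_LB(μ; C_J) = inf { θ(μ)ᵀ y : y ∈ 𝒴_LB(C_J) }`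
is a true lower bound for `λ_min(A(μ))`. -/
theorem scm_lower_bound_is_lower_bound
    {N Q P J : ℕ} (A : Fin Q → Matrix (Fin N) (Fin N) ℂ)
    (hA : ∀ q, (A q).IsHermitian) (θ : Fin Q → (Fin P → ℝ) → ℝ)
    (μs : Fin J → (Fin P → ℝ)) (μ : Fin P → ℝ)
    (hHerm : ∀ ν : Fin P → ℝ, (∑ q, (θ q ν : ℂ) • A q).IsHermitian)
    (hN : 0 < N) :
    sInf {r : ℝ | ∃ y : Fin Q → ℝ,
        (∀ q, lamMin (A q) ≤ y q ∧ y q ≤ lamMax (A q)) ∧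
        (∀ i : Fin J, ∑ q, θ q (μs i) * y q ≥ lamMin (∑ q, (θ q (μs i) : ℂ) • A q)) ∧
        r = ∑ q, θ q μ * y q}
      ≤ lamMin (∑ q, (θ q μ : ℂ) • A q) := by
  have : NeZero N := ⟨hN.ne'⟩
  obtain ⟨v, hv, hv_min⟩ := exists_RQ_eq_lamMin (hHerm μ)
  refine csInf_le ⟨∑ q, min (θ q μ * lamMin (A q)) (θ q μ * lamMax (A q)), ?_⟩
    ⟨fun q => RQ (A q) v, fun q => ⟨lamMin_le_RQ (hA q) hv, RQ_le_lamMax (hA q) hv⟩,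
      fun i => ?_, ?_⟩
  · rintro r ⟨y, hy, -, rfl⟩
    exact Finset.sum_le_sum fun q _ => min_mul_le_mul_of_mem_Icc (hy q)
  · rw [ge_iff_le, ← RQ_sum_smul]
    exact lamMin_le_RQ (hHerm (μs i)) hv
  · rw [← hv_min, RQ_sum_smul]
end

section
/- (Hermite interpolation of upper bound) Let μᵢ ∈ C_J be an interior point of D, suppose θ₁,...,θ_Q are differentiable at μᵢ, and suppose λᵢ = λ_min(A(μᵢ)) is a simple eigenvalue. Then the SCM upper bound λ_UB(μ;C_J) = min_{y ∈ {R(v₁),...,R(v_J)}} θ(μ)ᵀ y satisfies ∇λ_UB(μᵢ;C_J) = ∇λ_min(A(μᵢ)); i.e., both the value and the gradient of the upper bound coincide with those of the smallest eigenvalue at μᵢ. -/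
open Matrix

/-!
At a simple lowest eigenvalue of `A(μᵢ)`, the Rayleigh quotient `R(ν)` of an eigenvector `u`
of `A(μᵢ)` is a first-order approximation of `λ_min(A(ν))`. It is an upper bound, with equality
at `μᵢ`. Conversely, expanding a unit minimizer `w` for `A(ν)` in the eigenbasis of `A(μᵢ)`,
the spectral gap `δ` confines the mass of `w` off `u` and yields
`λ_min(A(ν)) ≥ R(ν) - G(ν)² / δ`, with `G(ν)` the entrywise `ℓ¹` norm of `A(ν) - A(μᵢ)` in that
basis; since `A` is differentiable, `G(ν) = O(ν - μᵢ)`. Hence `λ_min ∘ A` has the derivative of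
the smooth function `R` at `μᵢ`, and so does the SCM upper bound, which lies between
`λ_min(A(ν))` and its own `i`-th term `R(ν)`.
-/

open Complex Asymptotics Filter Topology
open scoped ComplexOrder

section DotProduct

variable {n : Type*} [Fintype n]

lemma re_star_dotProduct_self (c : n → ℂ) : (star c ⬝ᵥ c).re = ∑ j, normSq (c j) := by
  simp [dotProduct, Complex.re_sum, Complex.normSq_apply]

lemma re_star_dotProduct_self_pos {w : n → ℂ} (hw : w ≠ 0) : 0 < (star w ⬝ᵥ w).re :=
  (Complex.pos_iff.mp (dotProduct_star_self_pos_iff.mpr hw)).1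

lemma re_star_dotProduct_mulVec (F : Matrix n n ℂ) (c : n → ℂ) :
    (star c ⬝ᵥ F *ᵥ c).re = ∑ j, ∑ k, (star (c j) * F j k * c k).re := by
  simp only [dotProduct, mulVec, Finset.mul_sum, Complex.re_sum, Pi.star_apply, mul_assoc]

lemma star_dotProduct_mulVec_of_eq_zero {c : n → ℂ} {j₀ : n} (hc : ∀ j ≠ j₀, c j = 0)
    (F : Matrix n n ℂ) : star c ⬝ᵥ F *ᵥ c = normSq (c j₀) * F j₀ j₀ := by
  rw [dotProduct, Finset.sum_eq_single j₀ (fun j _ hj => by simp [hc j hj]) (by simp),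
    mulVec, dotProduct, Finset.sum_eq_single j₀ (fun k _ hk => by simp [hc k hk]) (by simp),
    Complex.normSq_eq_conj_mul_self, Pi.star_apply, RCLike.star_def]
  ring

variable [DecidableEq n]

lemma re_star_dotProduct_diagonal_mulVec (d : n → ℝ) (c : n → ℂ) :
    (star c ⬝ᵥ diagonal (fun j => (d j : ℂ)) *ᵥ c).re = ∑ j, d j * normSq (c j) := by
  rw [dotProduct, Complex.re_sum]
  refine Finset.sum_congr rfl fun j _ => ?_
  rw [mulVec_diagonal, Pi.star_apply, RCLike.star_def, mul_left_comm,
    ← Complex.normSq_eq_conj_mul_self]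
  simp [← Complex.ofReal_mul]

lemma star_dotProduct_mulVec_star_mulVec {U : Matrix n n ℂ} (hU : U ∈ unitaryGroup n ℂ)
    (M : Matrix n n ℂ) (w : n → ℂ) :
    star (star U *ᵥ w) ⬝ᵥ (star U * M * U) *ᵥ (star U *ᵥ w) = star w ⬝ᵥ M *ᵥ w := by
  rw [mulVec_mulVec, Matrix.mul_assoc, (mem_unitaryGroup_iff).mp hU, Matrix.mul_one, star_mulVec,
    ← dotProduct_mulVec, mulVec_mulVec, ← star_eq_conjTranspose, star_star, ← Matrix.mul_assoc,
    (mem_unitaryGroup_iff).mp hU, Matrix.one_mul]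

end DotProduct

namespace Matrix.IsHermitian

variable {n : Type*} [Fintype n] [DecidableEq n] {M : Matrix n n ℂ} (hM : M.IsHermitian)

noncomputable def eigenCoords (w : n → ℂ) : n → ℂ :=
  star (hM.eigenvectorUnitary : Matrix n n ℂ) *ᵥ w

lemma star_eigenvectorUnitary_mul_mul_eigenvectorUnitary :
    star (hM.eigenvectorUnitary : Matrix n n ℂ) * M * hM.eigenvectorUnitary =
      diagonal (fun j => (hM.eigenvalues j : ℂ)) := by
  simpa [Unitary.conjStarAlgAut_star_apply, Function.comp_def] using
    hM.conjStarAlgAut_star_eigenvectorUnitary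

lemma star_dotProduct_mulVec_eq_eigenCoords (M' : Matrix n n ℂ) (w : n → ℂ) :
    star w ⬝ᵥ M' *ᵥ w = star (hM.eigenCoords w) ⬝ᵥ
      (star (hM.eigenvectorUnitary : Matrix n n ℂ) * M' * (hM.eigenvectorUnitary : Matrix n n ℂ)) *ᵥ
        hM.eigenCoords w :=
  (star_dotProduct_mulVec_star_mulVec hM.eigenvectorUnitary.2 M' w).symm

lemma re_star_dotProduct_self_eq_sum_eigenCoords (w : n → ℂ) :
    (star w ⬝ᵥ w).re = ∑ j, normSq (hM.eigenCoords w j) := by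
  have h := hM.star_dotProduct_mulVec_eq_eigenCoords 1 w
  rw [one_mulVec, Matrix.mul_one, Unitary.coe_star_mul_self, one_mulVec] at h
  rw [h, re_star_dotProduct_self]

lemma re_star_dotProduct_mulVec_eq_sum_eigenCoords (w : n → ℂ) :
    (star w ⬝ᵥ M *ᵥ w).re = ∑ j, hM.eigenvalues j * normSq (hM.eigenCoords w j) := by
  rw [hM.star_dotProduct_mulVec_eq_eigenCoords, star_eigenvectorUnitary_mul_mul_eigenvectorUnitary,
    re_star_dotProduct_diagonal_mulVec]

lemma eigenCoords_eq_zero_of_mulVec_eq_smul {w : n → ℂ} {μ : ℝ} (hw : M *ᵥ w = (μ : ℂ) • w)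
    {j : n} (hj : hM.eigenvalues j ≠ μ) : hM.eigenCoords w j = 0 := by
  set U := (hM.eigenvectorUnitary : Matrix n n ℂ)
  have hcomm : diagonal (fun j => (hM.eigenvalues j : ℂ)) * star U = star U * M := by
    rw [← hM.star_eigenvectorUnitary_mul_mul_eigenvectorUnitary, Matrix.mul_assoc,
      (mem_unitaryGroup_iff).mp hM.eigenvectorUnitary.2, Matrix.mul_one]
  have hdiag : diagonal (fun j => (hM.eigenvalues j : ℂ)) *ᵥ hM.eigenCoords w =
      (μ : ℂ) • hM.eigenCoords w := by
    rw [eigenCoords, mulVec_mulVec, hcomm, ← mulVec_mulVec, hw, mulVec_smul]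
  have hj' := congrFun hdiag j
  rw [mulVec_diagonal, Pi.smul_apply, smul_eq_mul] at hj'
  exact (mul_eq_mul_right_iff.mp hj').resolve_left (by exact_mod_cast hj)

end Matrix.IsHermitian

section SmallestEigenvalue

variable {N : ℕ} {M : Matrix (Fin N) (Fin N) ℂ}

lemma lamMin_eq_iInf (hM : M.IsHermitian) : lamMin M = ⨅ j, hM.eigenvalues j := dif_pos hM

lemma lamMin_le_eigenvalues (hM : M.IsHermitian) (j : Fin N) : lamMin M ≤ hM.eigenvalues j :=
  (lamMin_eq_iInf hM).trans_le (ciInf_le (Set.finite_range _).bddBelow j)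

lemma lamMin_le_RQ_s4 (hM : M.IsHermitian) {w : Fin N → ℂ} (hw : w ≠ 0) : lamMin M ≤ RQ M w := by
  rw [RQ, le_div_iff₀ (re_star_dotProduct_self_pos hw),
    hM.re_star_dotProduct_mulVec_eq_sum_eigenCoords, hM.re_star_dotProduct_self_eq_sum_eigenCoords,
    Finset.mul_sum]
  exact Finset.sum_le_sum fun j _ =>
    mul_le_mul_of_nonneg_right (lamMin_le_eigenvalues hM j) (normSq_nonneg _)

lemma exists_re_star_dotProduct_mulVec_eq_lamMin [Nonempty (Fin N)] (hM : M.IsHermitian) :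
    ∃ w : Fin N → ℂ, (star w ⬝ᵥ w).re = 1 ∧ (star w ⬝ᵥ M *ᵥ w).re = lamMin M := by
  obtain ⟨j, hj⟩ := exists_eq_ciInf_of_finite (f := hM.eigenvalues)
  refine ⟨hM.eigenvectorBasis j, ?_, by rw [lamMin_eq_iInf hM, ← hj, hM.eigenvalues_eq j]; rfl⟩
  rw [dotProduct_comm, ← EuclideanSpace.inner_eq_star_dotProduct, inner_self_eq_norm_sq_to_K,
    hM.eigenvectorBasis.orthonormal.1 j]
  norm_num

end SmallestEigenvalue

section RayleighQuotient

variable {N : ℕ}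

lemma RQ_sum_ofReal_smul {ι : Type*} [Fintype ι] (c : ι → ℝ) (A : ι → Matrix (Fin N) (Fin N) ℂ)
    (u : Fin N → ℂ) : RQ (∑ q, (c q : ℂ) • A q) u = ∑ q, c q * RQ (A q) u := by
  simp only [RQ, sum_mulVec, dotProduct_sum, Complex.re_sum, Finset.sum_div, smul_mulVec,
    dotProduct_smul, smul_eq_mul, Complex.re_ofReal_mul, mul_div_assoc]

lemma RQ_eq_of_mulVec_eq_smul {M : Matrix (Fin N) (Fin N) ℂ} {u : Fin N → ℂ} {μ : ℝ}
    (hu : u ≠ 0) (h : M *ᵥ u = (μ : ℂ) • u) : RQ M u = μ := by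
  rw [RQ, h, dotProduct_smul, smul_eq_mul, Complex.re_ofReal_mul, mul_div_assoc,
    div_self (re_star_dotProduct_self_pos hu).ne', mul_one]

lemma RQ_eq_re_apply_of_eigenCoords_eq_zero {B : Matrix (Fin N) (Fin N) ℂ} (hB : B.IsHermitian)
    {u : Fin N → ℂ} (hu : u ≠ 0) {j₀ : Fin N} (hc : ∀ j ≠ j₀, hB.eigenCoords u j = 0)
    (M : Matrix (Fin N) (Fin N) ℂ) :
    RQ M u = ((star (hB.eigenvectorUnitary : Matrix (Fin N) (Fin N) ℂ) * M *
      (hB.eigenvectorUnitary : Matrix (Fin N) (Fin N) ℂ)) j₀ j₀).re := by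
  have hden : (star u ⬝ᵥ u).re = normSq (hB.eigenCoords u j₀) := by
    rw [hB.re_star_dotProduct_self_eq_sum_eigenCoords,
      Finset.sum_eq_single j₀ (fun j _ hj => by simp [hc j hj]) (by simp)]
  have hden_pos : 0 < normSq (hB.eigenCoords u j₀) := hden ▸ re_star_dotProduct_self_pos hu
  rw [RQ, hB.star_dotProduct_mulVec_eq_eigenCoords, star_dotProduct_mulVec_of_eq_zero hc,
    Complex.re_ofReal_mul, hden, mul_div_cancel_left₀ _ hden_pos.ne']

end RayleighQuotient

lemma exists_pos_forall_add_le {ι : Type*} [Finite ι] {f : ι → ℝ} {a : ℝ} {p : ι → Prop}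
    (h : ∀ j, p j → a < f j) : ∃ δ > 0, ∀ j, p j → a + δ ≤ f j := by
  have hev : ∀ᶠ δ in 𝓝[>] (0 : ℝ), ∀ j, p j → a + δ ≤ f j :=
    eventually_all.2 fun j => by
      by_cases hj : p j
      · filter_upwards [nhdsWithin_le_nhds (eventually_lt_nhds (sub_pos.2 (h j hj)))]
          with δ hδ _ using by linarith
      · exact Eventually.of_forall fun _ hj' => absurd hj' hj
  exact (hev.and self_mem_nhdsWithin).exists.imp fun δ h => ⟨h.2, h.1⟩

lemma neg_sq_div_le_mul_sub_mul_add_sqrt {G δ T : ℝ} (hG : 0 ≤ G) (hδ : 0 < δ) (hT₀ : 0 ≤ T)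
    (hT₁ : T ≤ 1) : -(G ^ 2 / δ) ≤ δ * T - G * (T + √T) := by
  obtain ⟨t, ht₀, rfl⟩ : ∃ t, 0 ≤ t ∧ T = t ^ 2 := ⟨√T, Real.sqrt_nonneg T, (Real.sq_sqrt hT₀).symm⟩
  have ht₁ : t ≤ 1 := by nlinarith
  have hamgm : 2 * G * t - δ * t ^ 2 ≤ G ^ 2 / δ := by
    rw [le_div_iff₀ hδ]; nlinarith [sq_nonneg (δ * t - G)]
  rw [Real.sqrt_sq ht₀]
  nlinarith [mul_le_mul_of_nonneg_left (pow_le_of_le_one ht₀ ht₁ two_ne_zero) hG]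

section Perturbation

variable {ι : Type*} [Fintype ι] {c : ι → ℂ} {j₀ : ι}

lemma norm_le_one_of_sum_normSq_eq_one (hc : ∑ j, normSq (c j) = 1) (j : ι) : ‖c j‖ ≤ 1 := by
  rw [Complex.norm_def, Real.sqrt_le_one]
  exact hc ▸ Finset.single_le_sum (fun k _ => normSq_nonneg (c k)) (Finset.mem_univ j)

lemma norm_le_sqrt_one_sub_normSq (hc : ∑ j, normSq (c j) = 1) {j : ι} (hj : j ≠ j₀) :
    ‖c j‖ ≤ √(1 - normSq (c j₀)) := by
  rw [Complex.norm_def]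
  refine Real.sqrt_le_sqrt ?_
  have := Finset.add_le_sum (fun k _ => normSq_nonneg (c k)) (Finset.mem_univ j)
    (Finset.mem_univ j₀) hj
  linarith

variable [DecidableEq ι]

lemma add_mul_one_sub_normSq_le_sum_mul_normSq {lam : ι → ℝ} {δ : ℝ}
    (hgap : ∀ j ≠ j₀, lam j₀ + δ ≤ lam j) (hc : ∑ j, normSq (c j) = 1) :
    lam j₀ + δ * (1 - normSq (c j₀)) ≤ ∑ j, lam j * normSq (c j) :=
  calc lam j₀ + δ * (1 - normSq (c j₀))
      = ∑ j, ((lam j₀ + δ) * normSq (c j) - if j = j₀ then δ * normSq (c j) else 0) := by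
        rw [Finset.sum_sub_distrib, ← Finset.mul_sum, hc, Finset.sum_ite_eq']
        simp only [Finset.mem_univ, if_true]
        ring
    _ ≤ ∑ j, lam j * normSq (c j) := Finset.sum_le_sum fun j _ => by
        split_ifs with hj
        · subst hj; linarith
        · simpa using mul_le_mul_of_nonneg_right (hgap j hj) (normSq_nonneg (c j))

lemma re_apply_sub_le_re_star_dotProduct_mulVec (F : Matrix ι ι ℂ)
    (hc : ∑ j, normSq (c j) = 1) :
    (F j₀ j₀).re - (∑ j, ∑ k, ‖F j k‖) * ((1 - normSq (c j₀)) + √(1 - normSq (c j₀))) ≤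
      (star c ⬝ᵥ F *ᵥ c).re := by
  set T := 1 - normSq (c j₀)
  have hT : 0 ≤ T := by
    have := Finset.single_le_sum (fun k _ => normSq_nonneg (c k)) (Finset.mem_univ j₀)
    linarith
  have hterm : ∀ j k, (if j = j₀ then if k = j₀ then (F j k).re else 0 else 0) -
      ‖F j k‖ * (T + √T) ≤ (star (c j) * F j k * c k).re := by
    intro j k
    have hle : |(star (c j) * F j k * c k).re| ≤ ‖c j‖ * ‖F j k‖ * ‖c k‖ := by
      simpa [norm_mul] using Complex.abs_re_le_norm (star (c j) * F j k * c k)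
    by_cases hjk : j = j₀ ∧ k = j₀
    · obtain ⟨hj, hk⟩ := hjk
      subst j k
      have hdiag : (star (c j₀) * F j₀ j₀ * c j₀).re = (1 - T) * (F j₀ j₀).re := by
        rw [mul_right_comm, RCLike.star_def, ← Complex.normSq_eq_conj_mul_self,
          Complex.re_ofReal_mul]
        ring
      rw [if_pos rfl, if_pos rfl, hdiag]
      nlinarith [abs_le.mp (Complex.abs_re_le_norm (F j₀ j₀)), norm_nonneg (F j₀ j₀),
        Real.sqrt_nonneg T]
    · -- one of the two factors `c j`, `c k` is a coordinate off `j₀`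
      have hsmall : ‖c j‖ * ‖c k‖ ≤ √T := by
        by_cases hj : j = j₀
        · have hk : k ≠ j₀ := fun hk => hjk ⟨hj, hk⟩
          simpa using mul_le_mul (norm_le_one_of_sum_normSq_eq_one hc j)
            (norm_le_sqrt_one_sub_normSq hc hk) (norm_nonneg _) zero_le_one
        · simpa using mul_le_mul (norm_le_sqrt_one_sub_normSq hc hj)
            (norm_le_one_of_sum_normSq_eq_one hc k) (norm_nonneg _) (Real.sqrt_nonneg T)
      have hite : (if j = j₀ then if k = j₀ then (F j k).re else 0 else 0) = 0 := by
        split_ifs with hj hk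
        · exact absurd ⟨hj, hk⟩ hjk
        all_goals rfl
      rw [hite]
      nlinarith [abs_le.mp hle, norm_nonneg (F j k),
        mul_le_mul_of_nonneg_left hsmall (norm_nonneg (F j k))]
  calc (F j₀ j₀).re - (∑ j, ∑ k, ‖F j k‖) * (T + √T)
      = ∑ j, ∑ k, ((if j = j₀ then if k = j₀ then (F j k).re else 0 else 0) -
          ‖F j k‖ * (T + √T)) := by
        simp [Finset.sum_sub_distrib, Finset.sum_mul, Finset.sum_ite_eq']
    _ ≤ (star c ⬝ᵥ F *ᵥ c).re := by
        rw [re_star_dotProduct_mulVec]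
        exact Finset.sum_le_sum fun j _ => Finset.sum_le_sum fun k _ => hterm j k

lemma le_sum_mul_normSq_add_re_star_dotProduct_mulVec {lam : ι → ℝ} {δ : ℝ} (hδ : 0 < δ)
    (hgap : ∀ j ≠ j₀, lam j₀ + δ ≤ lam j) (F : Matrix ι ι ℂ) (hc : ∑ j, normSq (c j) = 1) :
    lam j₀ + (F j₀ j₀).re - (∑ j, ∑ k, ‖F j k‖) ^ 2 / δ ≤
      ∑ j, lam j * normSq (c j) + (star c ⬝ᵥ F *ᵥ c).re := by
  have hT₁ : 1 - normSq (c j₀) ≤ 1 := by linarith [normSq_nonneg (c j₀)]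
  have hT₀ : 0 ≤ 1 - normSq (c j₀) := by
    have := Finset.single_le_sum (fun k _ => normSq_nonneg (c k)) (Finset.mem_univ j₀)
    linarith
  have hG : 0 ≤ ∑ j, ∑ k, ‖F j k‖ := by positivity
  linarith [add_mul_one_sub_normSq_le_sum_mul_normSq hgap hc,
    re_apply_sub_le_re_star_dotProduct_mulVec F hc (j₀ := j₀),
    neg_sq_div_le_mul_sub_mul_add_sqrt hG hδ hT₀ hT₁]

end Perturbation

lemma RQ_sub_sq_div_le_lamMin {N : ℕ} {B M : Matrix (Fin N) (Fin N) ℂ} (hB : B.IsHermitian)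
    (hM : M.IsHermitian) {j₀ : Fin N} {δ : ℝ} (hδ : 0 < δ)
    (hgap : ∀ j ≠ j₀, hB.eigenvalues j₀ + δ ≤ hB.eigenvalues j) {u : Fin N → ℂ} (hu : u ≠ 0)
    (hcoords : ∀ j ≠ j₀, hB.eigenCoords u j = 0) :
    RQ M u - (∑ j, ∑ k, ‖(star (hB.eigenvectorUnitary : Matrix (Fin N) (Fin N) ℂ) * (M - B) *
      (hB.eigenvectorUnitary : Matrix (Fin N) (Fin N) ℂ)) j k‖) ^ 2 / δ ≤ lamMin M := by
  have : Nonempty (Fin N) := ⟨j₀⟩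
  set U := (hB.eigenvectorUnitary : Matrix (Fin N) (Fin N) ℂ)
  obtain ⟨w, hw, hwM⟩ := exists_re_star_dotProduct_mulVec_eq_lamMin hM
  have hsplit : star U * M * U =
      diagonal (fun j => (hB.eigenvalues j : ℂ)) + star U * (M - B) * U := by
    rw [Matrix.mul_sub, Matrix.sub_mul, hB.star_eigenvectorUnitary_mul_mul_eigenvectorUnitary,
      add_sub_cancel]
  have hRQ : RQ M u = hB.eigenvalues j₀ + ((star U * (M - B) * U) j₀ j₀).re := by
    rw [RQ_eq_re_apply_of_eigenCoords_eq_zero hB hu hcoords, hsplit, Matrix.add_apply,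
      diagonal_apply_eq, Complex.add_re, Complex.ofReal_re]
  have hlam : lamMin M = ∑ j, hB.eigenvalues j * normSq (hB.eigenCoords w j) +
      (star (hB.eigenCoords w) ⬝ᵥ (star U * (M - B) * U) *ᵥ hB.eigenCoords w).re := by
    rw [← hwM, hB.star_dotProduct_mulVec_eq_eigenCoords, hsplit, add_mulVec, dotProduct_add,
      Complex.add_re, re_star_dotProduct_diagonal_mulVec]
  rw [hRQ, hlam]
  exact le_sum_mul_normSq_add_re_star_dotProduct_mulVec hδ hgap _
    (hB.re_star_dotProduct_self_eq_sum_eigenCoords w ▸ hw)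

lemma HasFDerivAt.of_isLittleO_sub {E F : Type*} [NormedAddCommGroup E] [NormedSpace ℝ E]
    [NormedAddCommGroup F] [NormedSpace ℝ F] {φ g : E → F} {f : E →L[ℝ] F} {x : E}
    (hφ : HasFDerivAt φ f x) (hx : g x = φ x)
    (h : (fun y => g y - φ y) =o[𝓝 x] fun y => y - x) : HasFDerivAt g f x := by
  rw [hasFDerivAt_iff_isLittleO] at hφ ⊢
  exact (h.add hφ).congr_left fun y => by rw [hx]; abel

lemma isLittleO_sub_of_le_of_le {α F : Type*} [NormedAddCommGroup F] {l : Filter α} {k : α → F}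
    {a g b : α → ℝ} (hag : ∀ y, a y ≤ g y) (hgb : ∀ y, g y ≤ b y)
    (h : (fun y => a y - b y) =o[l] k) :
    (fun y => g y - b y) =o[l] k := by
  refine (isBigO_of_le _ fun y => ?_).trans_isLittleO h
  rw [Real.norm_of_nonpos (sub_nonpos.2 (hgb y)), Real.norm_of_nonpos (by linarith [hag y, hgb y])]
  linarith [hag y]

lemma Asymptotics.IsBigO.sq_isLittleO_sub {E : Type*} [NormedAddCommGroup E] {s : E → ℝ} {x : E}
    (hs : s =O[𝓝 x] fun y => y - x) :
    (fun y => s y ^ 2) =o[𝓝 x] fun y => y - x :=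
  (hs.norm_right.pow 2).trans_isLittleO (isLittleO_pow_sub_sub x one_lt_two)

lemma Asymptotics.IsBigO.mul_mul_apply {α F n : Type*} [NormedAddCommGroup F] [Fintype n]
    {l : Filter α} {D : α → Matrix n n ℂ} {k : α → F} (hD : ∀ a b, (fun y => D y a b) =O[l] k)
    (P R : Matrix n n ℂ) (i j : n) : (fun y => (P * D y * R) i j) =O[l] k := by
  simp only [mul_apply, Finset.sum_mul]
  exact IsBigO.fun_sum fun b _ => IsBigO.fun_sum fun a _ =>
    ((hD a b).const_mul_left (P i a * R b j)).congr_left fun y => by ring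

theorem isLittleO_lamMin_sub_RQ {E : Type*} [NormedAddCommGroup E] [NormedSpace ℝ E] {N : ℕ}
    {M : E → Matrix (Fin N) (Fin N) ℂ} {x : E} (hM : ∀ y, (M y).IsHermitian)
    (hdiff : ∀ a b, DifferentiableAt ℝ (fun y => M y a b) x) {u : Fin N → ℂ} (hu : u ≠ 0)
    (hMu : M x *ᵥ u = (lamMin (M x) : ℂ) • u)
    (hsimple : ∃! j, (hM x).eigenvalues j = lamMin (M x)) :
    (fun y => lamMin (M y) - RQ (M y) u) =o[𝓝 x] fun y => y - x := by
  obtain ⟨j₀, hj₀, huniq⟩ := hsimple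
  obtain ⟨δ, hδ, hgap⟩ := exists_pos_forall_add_le (p := (· ≠ j₀)) fun j hj =>
    (lamMin_le_eigenvalues (hM x) j).lt_of_ne fun h => hj (huniq j h.symm)
  set U := ((hM x).eigenvectorUnitary : Matrix (Fin N) (Fin N) ℂ)
  set G : E → ℝ := fun y => ∑ a, ∑ b, ‖(star U * (M y - M x) * U) a b‖
  have hlower : ∀ y, RQ (M y) u - G y ^ 2 / δ ≤ lamMin (M y) := fun y =>
    RQ_sub_sq_div_le_lamMin (hM x) (hM y) hδ (by rwa [hj₀]) hu fun j hj =>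
      (hM x).eigenCoords_eq_zero_of_mulVec_eq_smul hMu fun h => hj (huniq j h)
  have hG : G =O[𝓝 x] fun y => y - x :=
    IsBigO.fun_sum fun a _ => IsBigO.fun_sum fun b _ =>
      (IsBigO.mul_mul_apply (fun a b => (hdiff a b).isBigO_sub) _ _ a b).norm_left
  refine (isBigO_of_le _ fun y => ?_).trans_isLittleO (hG.sq_isLittleO_sub.const_mul_left δ⁻¹)
  have hupper := lamMin_le_RQ_s4 (hM y) hu
  rw [Real.norm_of_nonpos (sub_nonpos.2 hupper), Real.norm_of_nonneg (by positivity)]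
  linarith [hlower y, div_eq_inv_mul (G y ^ 2) δ]

theorem scm_upper_bound_hermite_interpolation_general
    {N Q P J : ℕ} (A : Fin Q → Matrix (Fin N) (Fin N) ℂ)
    (θ : Fin Q → (Fin P → ℝ) → ℝ)
    (μs : Fin J → (Fin P → ℝ))
    (hHerm : ∀ ν : Fin P → ℝ, (∑ q, (θ q ν : ℂ) • A q).IsHermitian)
    (i₀ : Fin J)
    (hdiff : ∀ q, DifferentiableAt ℝ (θ q) (μs i₀))
    (hsimple : Fintype.card
        {j // (hHerm (μs i₀)).eigenvalues j = lamMin (∑ q, (θ q (μs i₀) : ℂ) • A q)} = 1)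
    (v : Fin J → (Fin N → ℂ)) (hv0 : ∀ i, v i ≠ 0)
    (hv : ∀ i, (∑ q, (θ q (μs i) : ℂ) • A q) *ᵥ v i
        = (lamMin (∑ q, (θ q (μs i) : ℂ) • A q) : ℂ) • v i)
    (lamUB lamminfun : (Fin P → ℝ) → ℝ)
    (hUB : ∀ ν, lamUB ν = Finset.univ.inf' (Finset.univ_nonempty_iff.mpr ⟨i₀⟩)
        fun i => ∑ q, θ q ν * RQ (A q) (v i))
    (hmin : ∀ ν, lamminfun ν = lamMin (∑ q, (θ q ν : ℂ) • A q)) :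
    lamUB (μs i₀) = lamminfun (μs i₀) ∧
    ∃ f : (Fin P → ℝ) →L[ℝ] ℝ,
      HasFDerivAt lamUB f (μs i₀) ∧ HasFDerivAt lamminfun f (μs i₀) := by
  obtain rfl : lamminfun = fun ν => lamMin (∑ q, (θ q ν : ℂ) • A q) := funext hmin
  have hRQ (ν) (i) : ∑ q, θ q ν * RQ (A q) (v i) = RQ (∑ q, (θ q ν : ℂ) • A q) (v i) :=
    (RQ_sum_ofReal_smul _ _ _).symm
  have hφ : HasFDerivAt (fun ν => ∑ q, θ q ν * RQ (A q) (v i₀)) _ (μs i₀) :=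
    (DifferentiableAt.fun_sum fun q _ => (hdiff q).mul_const _).hasFDerivAt
  have hentries (a b) : DifferentiableAt ℝ (fun ν => (∑ q, (θ q ν : ℂ) • A q) a b) (μs i₀) := by
    simp only [Matrix.sum_apply, Matrix.smul_apply, smul_eq_mul, ← Complex.real_smul]
    exact DifferentiableAt.fun_sum fun q _ => (hdiff q).smul_const _
  obtain ⟨⟨j₀, hj₀⟩, hj₀_unique⟩ := Fintype.card_eq_one_iff.mp hsimple
  have hsmall := isLittleO_lamMin_sub_RQ hHerm hentries (hv0 i₀) (hv i₀)
    ⟨j₀, hj₀, fun j hj => congrArg Subtype.val (hj₀_unique ⟨j, hj⟩)⟩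
  simp only [← hRQ] at hsmall
  have hmin_le_UB (ν) : lamMin (∑ q, (θ q ν : ℂ) • A q) ≤ lamUB ν :=
    (hUB ν).ge.trans' <| Finset.le_inf' _ _ fun i _ => hRQ ν i ▸ lamMin_le_RQ_s4 (hHerm ν) (hv0 i)
  have hUB_le_RQ (ν) : lamUB ν ≤ ∑ q, θ q ν * RQ (A q) (v i₀) :=
    (hUB ν).le.trans (Finset.inf'_le _ (Finset.mem_univ i₀))
  have hval : ∑ q, θ q (μs i₀) * RQ (A q) (v i₀) = lamMin (∑ q, (θ q (μs i₀) : ℂ) • A q) :=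
    hRQ _ _ ▸ RQ_eq_of_mulVec_eq_smul (hv0 i₀) (hv i₀)
  have hUBval : lamUB (μs i₀) = ∑ q, θ q (μs i₀) * RQ (A q) (v i₀) :=
    le_antisymm (hUB_le_RQ _) (hval ▸ hmin_le_UB _)
  exact ⟨hUBval.trans hval, _,
    hφ.of_isLittleO_sub hUBval (isLittleO_sub_of_le_of_le hmin_le_UB hUB_le_RQ hsmall),
    hφ.of_isLittleO_sub hval.symm hsmall⟩

/-- Hermite interpolation of the SCM upper bound: if `μᵢ` is an interior
point of `D`, each `θ_q` is differentiable at `μᵢ`, and `λ_min(A(μᵢ))` is a simple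
eigenvalue, then the SCM upper bound function and the smallest-eigenvalue function have the
same value and the same (Fréchet) derivative at `μᵢ`. -/
theorem scm_upper_bound_hermite_interpolation
    {N Q P J : ℕ} (A : Fin Q → Matrix (Fin N) (Fin N) ℂ)
    (hA : ∀ q, (A q).IsHermitian) (θ : Fin Q → (Fin P → ℝ) → ℝ)
    (D : Set (Fin P → ℝ)) (μs : Fin J → (Fin P → ℝ)) (hμs : ∀ i, μs i ∈ D)
    (hHerm : ∀ ν : Fin P → ℝ, (∑ q, (θ q ν : ℂ) • A q).IsHermitian)
    (hJ : 0 < J) (i₀ : Fin J) (hint : μs i₀ ∈ interior D)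
    (hdiff : ∀ q, DifferentiableAt ℝ (θ q) (μs i₀))
    (hsimple : Fintype.card
        {j // (hHerm (μs i₀)).eigenvalues j = lamMin (∑ q, (θ q (μs i₀) : ℂ) • A q)} = 1)
    (v : Fin J → (Fin N → ℂ)) (hv0 : ∀ i, v i ≠ 0)
    (hv : ∀ i, (∑ q, (θ q (μs i) : ℂ) • A q) *ᵥ v i
        = (lamMin (∑ q, (θ q (μs i) : ℂ) • A q) : ℂ) • v i)
    (lamUB lamminfun : (Fin P → ℝ) → ℝ)
    (hUB : ∀ ν, lamUB ν = Finset.univ.inf' (Finset.univ_nonempty_iff.mpr ⟨i₀⟩)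
        fun i => ∑ q, θ q ν * RQ (A q) (v i))
    (hmin : ∀ ν, lamminfun ν = lamMin (∑ q, (θ q ν : ℂ) • A q)) :
    lamUB (μs i₀) = lamminfun (μs i₀) ∧
    ∃ f : (Fin P → ℝ) →L[ℝ] ℝ,
      HasFDerivAt lamUB f (μs i₀) ∧ HasFDerivAt lamminfun f (μs i₀) :=
  scm_upper_bound_hermite_interpolation_general A θ μs hHerm i₀ hdiff hsimple v hv0 hv lamUB
    lamminfun hUB hmin
end

section
/- (Monotonicity of the lower-bound function) Fix ρ ≥ 0 and λ ∈ ℝ and define f : ℝ → ℝ by f(η) = min(λ, η) − 2ρ² / (|λ − η| + sqrt((λ − η)² + 4ρ²)). Then f is continuous and monotonically increasing on ℝ. -/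
open Matrix

/-!
Rationalising the fraction turns `f` into the closed form
`f η = (λ + η - √((λ - η)² + 4ρ²)) / 2`, the smaller root of `(x - λ)(x - η) = ρ²`.
This is visibly continuous, and it is monotone because `t ↦ √(t² + c)` is `1`-Lipschitz,
so the increase of `η` dominates the increase of the square root.
-/

namespace Real

theorem min_sub_div_abs_add_sqrt_eq {r : ℝ} (hr : 0 ≤ r) (a b : ℝ) :
    min a b - 2 * r / (|a - b| + √((a - b) ^ 2 + 4 * r)) = (a + b - √((a - b) ^ 2 + 4 * r)) / 2 := by
  have hmin : min a b = (a + b - |a - b|) / 2 := by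
    linarith [min_add_max a b, max_sub_min_eq_abs' a b]
  rcases hr.eq_or_lt with rfl | hr
  · simp [hmin, sqrt_sq_eq_abs]
  set s := √((a - b) ^ 2 + 4 * r)
  have hs_sq : s ^ 2 = (a - b) ^ 2 + 4 * r := sq_sqrt (by positivity)
  have hs_pos : 0 < s := sqrt_pos.mpr (by positivity)
  have hsum : 2 * r / (|a - b| + s) = (s - |a - b|) / 2 := by
    rw [div_eq_div_iff (by positivity) two_ne_zero]
    nlinarith [sq_abs (a - b)]
  rw [hsum, hmin]
  ring

theorem sqrt_sq_add_le_sqrt_sq_add_add_abs_sub {c : ℝ} (hc : 0 ≤ c) (x y : ℝ) :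
    √(y ^ 2 + c) ≤ √(x ^ 2 + c) + |x - y| := by
  set s := √(x ^ 2 + c)
  have hs_sq : s ^ 2 = x ^ 2 + c := sq_sqrt (by positivity)
  have habs_le : |x| ≤ s := by
    rw [← sqrt_sq_eq_abs]
    exact sqrt_le_sqrt (by linarith)
  -- `y² - x² - (x - y)² = 2 x (y - x) ≤ 2 |x| |x - y| ≤ 2 s |x - y|`
  have hcross : x * (y - x) ≤ s * |x - y| :=
    calc x * (y - x) ≤ |x| * |x - y| := by
          rw [← abs_sub_comm y x, ← abs_mul]; exact le_abs_self _
      _ ≤ s * |x - y| := by gcongr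
  rw [← sqrt_sq (by positivity : 0 ≤ s + |x - y|)]
  exact sqrt_le_sqrt (by nlinarith [sq_abs (x - y)])

end Real

theorem lower_bound_function_monotone_general (ρ lam : ℝ)
    (f : ℝ → ℝ)
    (hf : ∀ η, f η = min lam η
        - 2 * ρ ^ 2 / (|lam - η| + Real.sqrt ((lam - η) ^ 2 + 4 * ρ ^ 2))) :
    Continuous f ∧ Monotone f := by
  have hf_closed : f = fun η ↦ (lam + η - √((lam - η) ^ 2 + 4 * ρ ^ 2)) / 2 :=
    funext fun η ↦ (hf η).trans (Real.min_sub_div_abs_add_sqrt_eq (sq_nonneg ρ) lam η)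
  subst hf_closed
  refine ⟨by fun_prop, fun a b hab ↦ ?_⟩
  have hsqrt := Real.sqrt_sq_add_le_sqrt_sq_add_add_abs_sub (by positivity : 0 ≤ 4 * ρ ^ 2)
    (lam - a) (lam - b)
  rw [show lam - a - (lam - b) = b - a by ring, abs_of_nonneg (sub_nonneg.mpr hab)] at hsqrt
  dsimp only
  linarith

/-- Lemma 3.1: for `ρ ≥ 0` and `λ ∈ ℝ`, the function
`f(η) = min(λ,η) − 2ρ²/(|λ−η| + √((λ−η)² + 4ρ²))` is continuous and monotonically
increasing. -/
theorem lower_bound_function_monotone (ρ lam : ℝ) (hρ : 0 ≤ ρ)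
    (f : ℝ → ℝ)
    (hf : ∀ η, f η = min lam η
        - 2 * ρ ^ 2 / (|lam - η| + Real.sqrt ((lam - η) ^ 2 + 4 * ρ ^ 2))) :
    Continuous f ∧ Monotone f :=
  lower_bound_function_monotone_general ρ lam f hf
end

section
/- (Exponential convergence of Ritz lower/upper bounds, simplified form) Let A(μ) be Hermitian, μ ∈ [−1,1], and suppose the subspace 𝒱 satisfies min_{ṽ ∈ 𝒱, ‖ṽ‖=1} ‖ṽ − v(μ)‖₂ ≤ ε for the unit eigenvector v(μ) of λ_min(A(μ)). Then the smallest Ritz value λ_SUB of A(μ) with respect to 𝒱 satisfies λ_min(A(μ)) ≤ λ_SUB ≤ λ_min(A(μ)) + C ε² where C depends only on ‖A(μ)‖₂ and the spectral gap; in particular if the distance decays like R^(−J) for R > 1 then λ_SUB − λ_min(A(μ)) ≤ C_U R^(−2J). -/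
/-! Since `v` spans the kernel of the Hermitian matrix `M = A - λ_min`, for every unit vector `u`
we have `u*Au - λ_min = u*Mu = (u - v)*M(u - v) ≤ (λ_max - λ_min)‖u - v‖²`, so a Rayleigh quotient
is accurate to second order in the eigenvector error. The smallest Ritz value `λ_min(V*AV)` is at
most the Rayleigh quotient of any unit vector in the range of `V`, and at least `λ_min(A)` because
`V*AV - λ_min(A) = V*(A - λ_min(A))V` is positive semidefinite. -/

open Matrix

open scoped ComplexOrder

namespace Matrix

variable {n 𝕜 : Type*} [Fintype n] [RCLike 𝕜]

lemma dotProduct_sub_smul_one_mulVec [DecidableEq n] (A : Matrix n n 𝕜) (c : 𝕜) (x : n → 𝕜) :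
    star x ⬝ᵥ (A - c • 1) *ᵥ x = star x ⬝ᵥ A *ᵥ x - c * (star x ⬝ᵥ x) := by
  rw [sub_mulVec, smul_mulVec, one_mulVec, dotProduct_sub, dotProduct_smul, smul_eq_mul]

lemma dotProduct_mulVec_sub_of_mulVec_eq_zero {M : Matrix n n 𝕜} (hM : M.IsHermitian)
    {v : n → 𝕜} (hv : M *ᵥ v = 0) (u : n → 𝕜) :
    star (u - v) ⬝ᵥ M *ᵥ (u - v) = star u ⬝ᵥ M *ᵥ u := by
  have hvu : star v ⬝ᵥ M *ᵥ u = 0 := by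
    rw [dotProduct_mulVec, ← hM.eq, ← star_mulVec, hv, star_zero, zero_dotProduct]
  rw [mulVec_sub, hv, sub_zero, star_sub, sub_dotProduct, hvu, sub_zero]

namespace IsHermitian

variable [DecidableEq n] {A : Matrix n n 𝕜}

lemma posSemidef_sub_smul_one_iff (hA : A.IsHermitian) (c : ℝ) :
    (A - (c : 𝕜) • 1).PosSemidef ↔ ∀ i, c ≤ hA.eigenvalues i := by
  have hconj : A - (c : 𝕜) • 1 = Unitary.conjStarAlgAut 𝕜 _ hA.eigenvectorUnitary
      (diagonal fun i => ((hA.eigenvalues i - c : ℝ) : 𝕜)) := by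
    conv_lhs => rw [hA.spectral_theorem]
    rw [← map_one (Unitary.conjStarAlgAut 𝕜 _ hA.eigenvectorUnitary), ← map_smul, ← map_sub,
      ← diagonal_one, ← diagonal_smul, diagonal_sub]
    simp
  rw [hconj, Unitary.conjStarAlgAut_apply,
    Unitary.isUnit_coe.posSemidef_star_right_conjugate_iff, posSemidef_diagonal_iff]
  simp

lemma posSemidef_smul_one_sub_iff (hA : A.IsHermitian) (c : ℝ) :
    ((c : 𝕜) • 1 - A).PosSemidef ↔ ∀ i, hA.eigenvalues i ≤ c := by
  have hconj : (c : 𝕜) • 1 - A = Unitary.conjStarAlgAut 𝕜 _ hA.eigenvectorUnitary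
      (diagonal fun i => ((c - hA.eigenvalues i : ℝ) : 𝕜)) := by
    conv_lhs => rw [hA.spectral_theorem]
    rw [← map_one (Unitary.conjStarAlgAut 𝕜 _ hA.eigenvectorUnitary), ← map_smul, ← map_sub,
      ← diagonal_one, ← diagonal_smul, diagonal_sub]
    simp
  rw [hconj, Unitary.conjStarAlgAut_apply,
    Unitary.isUnit_coe.posSemidef_star_right_conjugate_iff, posSemidef_diagonal_iff]
  simp

end IsHermitian

end Matrix

section SmallestEigenvalue

variable {n : ℕ} {𝕜 : Type*} [RCLike 𝕜] {A : Matrix (Fin n) (Fin n) 𝕜}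

lemma lamMin_le_eigenvalues_s15 (hA : A.IsHermitian) (i : Fin n) : lamMin A ≤ hA.eigenvalues i := by
  rw [lamMin, dif_pos hA]
  exact ciInf_le (Set.finite_range _).bddBelow i

lemma eigenvalues_le_lamMax (hA : A.IsHermitian) (i : Fin n) : hA.eigenvalues i ≤ lamMax A := by
  rw [lamMax, dif_pos hA]
  exact le_ciSup (Set.finite_range _).bddAbove i

lemma lamMin_le_lamMax (A : Matrix (Fin n) (Fin n) 𝕜) : lamMin A ≤ lamMax A := by
  by_cases hA : A.IsHermitian
  · rcases isEmpty_or_nonempty (Fin n) with hn | ⟨⟨i⟩⟩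
    · simp [lamMin, lamMax, hA, Real.iInf_of_isEmpty, Real.iSup_of_isEmpty]
    · exact (lamMin_le_eigenvalues_s15 hA i).trans (eigenvalues_le_lamMax hA i)
  · simp [lamMin, lamMax, hA]

lemma le_lamMin_of_posSemidef_sub [NeZero n] (hA : A.IsHermitian) {c : ℝ}
    (hc : (A - (c : 𝕜) • 1).PosSemidef) : c ≤ lamMin A := by
  rw [lamMin, dif_pos hA]
  exact le_ciInf ((hA.posSemidef_sub_smul_one_iff c).mp hc)

lemma lamMin_mul_re_dotProduct_self_le (hA : A.IsHermitian) (x : Fin n → 𝕜) :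
    lamMin A * RCLike.re (star x ⬝ᵥ x) ≤ RCLike.re (star x ⬝ᵥ A *ᵥ x) := by
  have hpsd := (hA.posSemidef_sub_smul_one_iff (lamMin A)).mpr (lamMin_le_eigenvalues_s15 hA)
  have := hpsd.re_dotProduct_nonneg x
  rw [dotProduct_sub_smul_one_mulVec, map_sub, RCLike.re_ofReal_mul] at this
  linarith

lemma re_dotProduct_mulVec_le_lamMax_mul (hA : A.IsHermitian) (x : Fin n → 𝕜) :
    RCLike.re (star x ⬝ᵥ A *ᵥ x) ≤ lamMax A * RCLike.re (star x ⬝ᵥ x) := by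
  have hpsd := (hA.posSemidef_smul_one_sub_iff (lamMax A)).mpr (eigenvalues_le_lamMax hA)
  have := hpsd.re_dotProduct_nonneg x
  rw [sub_mulVec, smul_mulVec, one_mulVec, dotProduct_sub, dotProduct_smul, smul_eq_mul,
    map_sub, RCLike.re_ofReal_mul] at this
  linarith

lemma re_dotProduct_mulVec_le_of_mulVec_eq_smul (hA : A.IsHermitian) {μ : ℝ} {u v : Fin n → 𝕜}
    (hv : A *ᵥ v = (μ : 𝕜) • v) (hu : star u ⬝ᵥ u = 1) :
    RCLike.re (star u ⬝ᵥ A *ᵥ u) ≤ μ + (lamMax A - μ) * RCLike.re (star (u - v) ⬝ᵥ (u - v)) := by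
  have hM : (A - (μ : 𝕜) • 1).IsHermitian := hA.sub (isHermitian_one.smul (RCLike.conj_ofReal μ))
  have hMv : (A - (μ : 𝕜) • 1) *ᵥ v = 0 := by
    rw [sub_mulVec, smul_mulVec, one_mulVec, hv, sub_self]
  have hshift := dotProduct_mulVec_sub_of_mulVec_eq_zero hM hMv u
  rw [dotProduct_sub_smul_one_mulVec, dotProduct_sub_smul_one_mulVec, hu, mul_one] at hshift
  have hmax := re_dotProduct_mulVec_le_lamMax_mul hA (u - v)
  have hre := congrArg RCLike.re hshift
  rw [map_sub, map_sub, RCLike.re_ofReal_mul, RCLike.ofReal_re] at hre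
  linarith

end SmallestEigenvalue

section Ritz

variable {n k : ℕ} {𝕜 : Type*} [RCLike 𝕜] {A : Matrix (Fin n) (Fin n) 𝕜}
  {V : Matrix (Fin n) (Fin k) 𝕜}

lemma dotProduct_conjTranspose_mul_mul_mulVec (A : Matrix (Fin n) (Fin n) 𝕜)
    (V : Matrix (Fin n) (Fin k) 𝕜) (w : Fin k → 𝕜) :
    star w ⬝ᵥ (Vᴴ * A * V) *ᵥ w = star (V *ᵥ w) ⬝ᵥ A *ᵥ (V *ᵥ w) := by
  rw [star_mulVec, ← mulVec_mulVec, ← mulVec_mulVec, dotProduct_mulVec]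

lemma lamMin_le_lamMin_conjTranspose_mul_mul [NeZero k] (hA : A.IsHermitian) (hV : Vᴴ * V = 1) :
    lamMin A ≤ lamMin (Vᴴ * A * V) := by
  have hcompress : Vᴴ * A * V - (lamMin A : 𝕜) • 1 = Vᴴ * (A - (lamMin A : 𝕜) • 1) * V := by
    rw [Matrix.mul_sub, Matrix.sub_mul, Matrix.mul_smul, Matrix.smul_mul, Matrix.mul_one, hV]
  have hpsd := (hA.posSemidef_sub_smul_one_iff (lamMin A)).mpr (lamMin_le_eigenvalues_s15 hA)
  refine le_lamMin_of_posSemidef_sub (isHermitian_conjTranspose_mul_mul V hA) ?_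
  rw [hcompress]
  exact hpsd.conjTranspose_mul_mul_same V

lemma lamMin_conjTranspose_mul_mul_le (hA : A.IsHermitian) (hV : Vᴴ * V = 1) {w : Fin k → 𝕜}
    (hw : star (V *ᵥ w) ⬝ᵥ V *ᵥ w = 1) :
    lamMin (Vᴴ * A * V) ≤ RCLike.re (star (V *ᵥ w) ⬝ᵥ A *ᵥ (V *ᵥ w)) := by
  have hw' : star w ⬝ᵥ w = 1 := by
    rwa [star_mulVec, ← dotProduct_mulVec, mulVec_mulVec, hV, one_mulVec] at hw
  simpa [dotProduct_conjTranspose_mul_mul_mulVec, hw'] using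
    lamMin_mul_re_dotProduct_self_le (isHermitian_conjTranspose_mul_mul V hA) w

end Ritz

theorem ritz_value_quadratic_accuracy_general
    {N : ℕ} (A : Matrix (Fin N) (Fin N) ℂ) (hA : A.IsHermitian)
    (v : Fin N → ℂ)
    (hv : A *ᵥ v = (lamMin A : ℂ) • v) :
    ∃ C : ℝ, 0 ≤ C ∧
      ∀ (k : ℕ) (V : Matrix (Fin N) (Fin k) ℂ) (ε : ℝ), 0 ≤ ε → Vᴴ * V = 1 →
        (∃ w : Fin k → ℂ, star (V *ᵥ w) ⬝ᵥ (V *ᵥ w) = 1 ∧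
          Real.sqrt ((star (V *ᵥ w - v) ⬝ᵥ (V *ᵥ w - v)).re) ≤ ε) →
        lamMin A ≤ lamMin (Vᴴ * A * V) ∧
        lamMin (Vᴴ * A * V) ≤ lamMin A + C * ε ^ 2 := by
  have hC : 0 ≤ lamMax A - lamMin A := sub_nonneg.mpr (lamMin_le_lamMax A)
  refine ⟨lamMax A - lamMin A, hC, ?_⟩
  rintro k V ε hε hV ⟨w, hw, hdist⟩
  have : NeZero k := ⟨by rintro rfl; simp [Subsingleton.elim w 0] at hw⟩
  refine ⟨lamMin_le_lamMin_conjTranspose_mul_mul hA hV, ?_⟩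
  have hdist_sq : (star (V *ᵥ w - v) ⬝ᵥ (V *ᵥ w - v)).re ≤ ε ^ 2 :=
    (Real.sqrt_le_left hε).mp hdist
  calc lamMin (Vᴴ * A * V) ≤ RCLike.re (star (V *ᵥ w) ⬝ᵥ A *ᵥ (V *ᵥ w)) :=
        lamMin_conjTranspose_mul_mul_le hA hV hw
    _ ≤ lamMin A + (lamMax A - lamMin A) * (star (V *ᵥ w - v) ⬝ᵥ (V *ᵥ w - v)).re :=
        re_dotProduct_mulVec_le_of_mulVec_eq_smul hA hv hw
    _ ≤ lamMin A + (lamMax A - lamMin A) * ε ^ 2 := by gcongr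

/-- quadratic accuracy of the smallest Ritz value: for a Hermitian `A`
there is a constant `C ≥ 0` (depending only on `A`) such that whenever a subspace with
orthonormal basis `V` contains a unit vector within distance `ε` of the unit eigenvector
`v` for `λ_min(A)`, the smallest Ritz value `λ_SUB = λ_min(V*AV)` satisfies
`λ_min(A) ≤ λ_SUB ≤ λ_min(A) + C ε²`; in particular a distance `R^(−J)` yields an error
of order `R^(−2J)`. -/
theorem ritz_value_quadratic_accuracy
    {N : ℕ} (A : Matrix (Fin N) (Fin N) ℂ) (hA : A.IsHermitian)
    (v : Fin N → ℂ) (hv1 : star v ⬝ᵥ v = 1)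
    (hv : A *ᵥ v = (lamMin A : ℂ) • v) :
    ∃ C : ℝ, 0 ≤ C ∧
      ∀ (k : ℕ) (V : Matrix (Fin N) (Fin k) ℂ) (ε : ℝ), 0 ≤ ε → Vᴴ * V = 1 →
        (∃ w : Fin k → ℂ, star (V *ᵥ w) ⬝ᵥ (V *ᵥ w) = 1 ∧
          Real.sqrt ((star (V *ᵥ w - v) ⬝ᵥ (V *ᵥ w - v)).re) ≤ ε) →
        lamMin A ≤ lamMin (Vᴴ * A * V) ∧
        lamMin (Vᴴ * A * V) ≤ lamMin A + C * ε ^ 2 :=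
  ritz_value_quadratic_accuracy_general A hA v hv
end
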